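/- arXiv:1411.5329 — 2 statements merged into one kernel-verified Lean document; each statement's English description precedes it below -/
import Mathlib

section
/- Let x₁,…,x₄ be points in a metric space, v₁,…,v₄ the vertices of a nondegenerate tetrahedron in ℝ³, and W the associated quadratic form. If W(w) < 0 for some w ∈ ℝ³, then w is transversal to each of the four planes parallel to the faces of the tetrahedron, i.e., w does not lie in the span of {vⱼ - v_k : j,k ≠ i} for any i. -/
/-!
Each face plane is spanned by two edges `a = v j₁ - v j₂`, `b = v j₂ - v j₃` of that face, and
`W a`, `W b`, `W (a + b)` are the squared side lengths of the triangle `x j₁, x j₂, x j₃`.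
The triangle inequality makes the Gram-type form `W (s • a + t • b)` nonnegative, so a vector
with `W w < 0` lies in no face plane.
-/

open Submodule QuadraticMap

theorem sq_add_sq_add_mul_nonneg_of_triangle {A B C : ℝ} (hB_le : B ≤ A + C)
    (hA_le : A ≤ B + C) (hC_le : C ≤ A + B) (s t : ℝ) :
    0 ≤ s ^ 2 * A ^ 2 + t ^ 2 * C ^ 2 + s * t * (B ^ 2 - A ^ 2 - C ^ 2) := by
  -- `|B² - A² - C²| ≤ 2AC` is dominated by `s²A² + t²C² ≥ 2|st|AC`.
  have upper : B ^ 2 - A ^ 2 - C ^ 2 ≤ 2 * A * C := by nlinarith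
  have lower : -(2 * A * C) ≤ B ^ 2 - A ^ 2 - C ^ 2 := by nlinarith
  rcases le_total 0 (s * t) with h | h
  · nlinarith [sq_nonneg (s * A - t * C), mul_le_mul_of_nonneg_left lower h]
  · nlinarith [sq_nonneg (s * A + t * C), mul_le_mul_of_nonpos_left upper h]

theorem QuadraticMap.map_smul_add_smul {M : Type*} [AddCommGroup M] [Module ℝ M]
    (Q : QuadraticForm ℝ M) (a b : M) (s t : ℝ) :
    Q (s • a + t • b) = s ^ 2 * Q a + t ^ 2 * Q b + s * t * (Q (a + b) - Q a - Q b) := by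
  have h : Q (s • a + t • b) = Q (s • a) + Q (t • b) + polar Q (s • a) (t • b) := by
    rw [polar]; ring
  rw [h, Q.map_smul, Q.map_smul, polar_smul_left, polar_smul_right, polar]
  simp only [smul_eq_mul]
  ring

theorem QuadraticMap.nonneg_of_mem_span_pair_of_dist {M X : Type*} [AddCommGroup M] [Module ℝ M]
    [PseudoMetricSpace X] (Q : QuadraticForm ℝ M) {a b : M} {p q r : X}
    (ha : Q a = dist p q ^ 2) (hb : Q b = dist q r ^ 2) (hab : Q (a + b) = dist p r ^ 2)
    {w : M} (hw : w ∈ span ℝ {a, b}) : 0 ≤ Q w := by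
  obtain ⟨s, t, rfl⟩ := mem_span_pair.1 hw
  rw [Q.map_smul_add_smul, ha, hb, hab]
  exact sq_add_sq_add_mul_nonneg_of_triangle (dist_triangle p q r)
    (dist_triangle_right p q r) (dist_triangle_left q r p) s t

theorem sub_mem_span_pair_sub {ι R M : Type*} [Ring R] [AddCommGroup M] [Module R M]
    (v : ι → M) {a b c j k : ι} (hj : j = a ∨ j = b ∨ j = c) (hk : k = a ∨ k = b ∨ k = c) :
    v j - v k ∈ span R {v a - v b, v b - v c} := by
  have to_c : ∀ l, l = a ∨ l = b ∨ l = c → v l - v c ∈ span R {v a - v b, v b - v c} := by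
    rintro l (rfl | rfl | rfl) <;> refine mem_span_pair.2 ?_
    exacts [⟨1, 1, by simp⟩, ⟨0, 1, by simp⟩, ⟨0, 0, by simp⟩]
  rw [← sub_sub_sub_cancel_right (v j) (v k) (v c)]
  exact sub_mem (to_c j hj) (to_c k hk)

theorem Fin.eq_add_one_or_add_two_or_add_three_of_ne {i j : Fin 4} (h : j ≠ i) :
    j = i + 1 ∨ j = i + 2 ∨ j = i + 3 := by
  revert i j; decide

theorem negative_vector_transversal_general (X : Type*) [MetricSpace X] (x : Fin 4 → X)
    (v : Fin 4 → (Fin 3 → ℝ))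
    (W : QuadraticForm ℝ (Fin 3 → ℝ))
    (hW : ∀ i j, W (v i - v j) = dist (x i) (x j) ^ 2)
    (w : Fin 3 → ℝ) (hw : W w < 0) :
    ∀ i : Fin 4,
      w ∉ Submodule.span ℝ {u | ∃ j k, j ≠ i ∧ k ≠ i ∧ u = v j - v k} := by
  intro i hmem
  have face_le : span ℝ {u | ∃ j k, j ≠ i ∧ k ≠ i ∧ u = v j - v k} ≤
      span ℝ {v (i + 1) - v (i + 2), v (i + 2) - v (i + 3)} := by
    refine span_le.2 ?_
    rintro u ⟨j, k, hj, hk, rfl⟩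
    exact sub_mem_span_pair_sub v (Fin.eq_add_one_or_add_two_or_add_three_of_ne hj)
      (Fin.eq_add_one_or_add_two_or_add_three_of_ne hk)
  have hnonneg := W.nonneg_of_mem_span_pair_of_dist (hW _ _) (hW _ _)
    (by rw [sub_add_sub_cancel, hW]) (face_le hmem)
  exact hnonneg.not_gt hw

/-- a vector on which the associated form is negative is transversal
to each of the four planes parallel to the faces of the tetrahedron. -/
theorem negative_vector_transversal (X : Type*) [MetricSpace X] (x : Fin 4 → X)
    (v : Fin 4 → (Fin 3 → ℝ)) (hv : AffineIndependent ℝ v)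
    (W : QuadraticForm ℝ (Fin 3 → ℝ))
    (hW : ∀ i j, W (v i - v j) = dist (x i) (x j) ^ 2)
    (w : Fin 3 → ℝ) (hw : W w < 0) :
    ∀ i : Fin 4,
      w ∉ Submodule.span ℝ {u | ∃ j k, j ≠ i ∧ k ≠ i ∧ u = v j - v k} :=
  negative_vector_transversal_general X x v W hW w hw
end

section
/- Any four points x₁, x₂, x₃, x₄ in a Hilbert space (or in a convex subset of a Hilbert space) have nonnegative associated quadratic form: the unique quadratic form W on ℝ³ with W(vᵢ - vⱼ) = ‖xᵢ - xⱼ‖² for the vertices v₁,…,v₄ of a nondegenerate tetrahedron satisfies W(v) ≥ 0 for all v ∈ ℝ³. -/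
/-!
Take `v 3` as origin: the differences `v i - v 3` form a basis of `ℝ³`, and let `T` be the linear
map sending them to `x i - x 3`. By polarization, the polar forms of `W` and of `u ↦ ‖T u‖²` are
both determined by the same squared distances, so they agree on this basis. Hence
`W u = ‖T u‖² ≥ 0`.
-/

namespace QuadraticMap

theorem polar_eq_add_sub_map_sub {R M N : Type*} [CommRing R] [AddCommGroup M] [Module R M]
    [AddCommGroup N] [Module R N] (Q : QuadraticMap R M N) (x y : M) :
    polar Q x y = Q x + Q y - Q (x - y) := by
  rw [← neg_neg (polar Q x y), ← polar_neg_right, polar, ← sub_eq_add_neg, QuadraticMap.map_neg]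
  abel

theorem apply_eq_norm_constr_sq {ι V H : Type*} [AddCommGroup V] [Module ℝ V]
    [NormedAddCommGroup H] [InnerProductSpace ℝ H] (W : QuadraticForm ℝ V) (b : Module.Basis ι ℝ V)
    (y : ι → H) (h₀ : ∀ i, W (b i) = ‖y i‖ ^ 2) (h : ∀ i j, W (b i - b j) = ‖y i - y j‖ ^ 2)
    (u : V) : W u = ‖b.constr ℝ y u‖ ^ 2 := by
  set T := b.constr ℝ y
  have hpolar : polarBilin W = (2 : ℝ) • (innerₗ H).compl₁₂ T T := by
    refine LinearMap.ext_basis b b fun i j => ?_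
    have hexpand := norm_sub_sq_real (y i) (y j)
    simp only [polarBilin_apply_apply, polar_eq_add_sub_map_sub, h₀, h, LinearMap.smul_apply,
      LinearMap.compl₁₂_apply, innerₗ_apply_apply, T, Module.Basis.constr_basis, smul_eq_mul]
    linarith
  have hu := congr($hpolar u u)
  simp only [polarBilin_apply_apply, polar_self, LinearMap.smul_apply, LinearMap.compl₁₂_apply,
    innerₗ_apply_apply, real_inner_self_eq_norm_sq, nsmul_eq_mul, Nat.cast_ofNat, smul_eq_mul] at hu
  linarith

end QuadraticMap

/-- four points in a (real) inner product space have nonnegative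
associated quadratic form. -/
theorem hilbert_quadruple_form_nonneg (H : Type*) [NormedAddCommGroup H]
    [InnerProductSpace ℝ H] (x : Fin 4 → H)
    (v : Fin 4 → (Fin 3 → ℝ)) (hv : AffineIndependent ℝ v)
    (W : QuadraticForm ℝ (Fin 3 → ℝ))
    (hW : ∀ i j, W (v i - v j) = ‖x i - x j‖ ^ 2) :
    ∀ u, 0 ≤ W u := by
  intro u
  let simplex : AffineBasis (Fin 4) ℝ (Fin 3 → ℝ) :=
    ⟨v, hv, hv.affineSpan_eq_top_iff_card_eq_finrank_add_one.2 (by simp)⟩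
  rw [W.apply_eq_norm_constr_sq (simplex.basisOf 3) (fun i => x i - x 3) (fun i => ?_)
    (fun i j => ?_) u]
  · positivity
  · simp only [simplex.basisOf_apply, vsub_eq_sub]
    exact hW i 3
  · simp only [simplex.basisOf_apply, vsub_eq_sub, sub_sub_sub_cancel_right]
    exact hW i j
end
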